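/- arXiv:2005.04252 — 2 statements merged into one kernel-verified Lean document; each statement's English description precedes it below -/
import Mathlib

section
/- Let M be a matroid on a finite ground set E and let B₁, …, Bₙ be an enumeration of all the bases of M such that for every i = 1, …, n there exists a generic function ℓᵢ : E → ℝ with the property that ℓᵢ(B_j) < ℓᵢ(B_i) if and only if j < i. Then B₁, …, Bₙ is a shelling order of the independence complex I(M). (Lemma 6.1 (lem:broken), shelling part: broken line orders are shelling orders.) -/
/-!
Let `i < j`. Since `ℓⱼ(Bᵢ) < ℓⱼ(Bⱼ)`, descending from `Bⱼ` towards `Bᵢ` along symmetric basis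
exchanges shows that some single exchange `Bⱼ - e + f` with `e ∈ Bⱼ \ Bᵢ` already lowers the
`ℓⱼ`-weight. That base is some `Bₖ`, necessarily with `k < j`, and `Bₖ ∩ Bⱼ = Bⱼ - e` is a
facet of `Bⱼ` containing `Bᵢ ∩ Bⱼ`.
-/

open scoped BigOperators

/-- The `ℓ`-weight of a set `A ⊆ E`. -/
noncomputable def wt {α : Type*} (ℓ : α → ℝ) (A : Set α) : ℝ := ∑ᶠ e ∈ A, ℓ e

/-- `ℓ` is generic for `M`. -/
def Generic {α : Type*} (M : Matroid α) (ℓ : α → ℝ) : Prop :=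
  Function.Injective ℓ ∧
    ∀ ⦃B B' : Set α⦄, M.IsBase B → M.IsBase B' → B ≠ B' → wt ℓ B ≠ wt ℓ B'

/-- `F 0, …, F (n-1)` is a shelling order. -/
def IsShelling {α : Type*} {n : ℕ} (F : Fin n → Set α) : Prop :=
  ∀ i j : Fin n, i < j → ∃ k : Fin n, k < j ∧ F i ∩ F j ⊆ F k ∩ F j ∧
    (F k ∩ F j).ncard = (F j).ncard - 1

/-- `B` enumerates (without repetition) all the bases of `M`. -/
def EnumeratesBases {α : Type*} (M : Matroid α) {n : ℕ} (B : Fin n → Set α) : Prop :=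
  Function.Injective B ∧ (∀ i, M.IsBase (B i)) ∧ ∀ C, M.IsBase C → ∃ i, B i = C

open Set

lemma wt_insert_sdiff_singleton {α : Type*} (ℓ : α → ℝ) {A : Set α} (hA : A.Finite) {e f : α}
    (he : e ∈ A) (hf : f ∉ A) :
    wt ℓ (insert f (A \ {e})) = wt ℓ A - ℓ e + ℓ f := by
  have hfA : f ∉ A \ {e} := fun h ↦ hf h.1
  have heA : e ∉ A \ {e} := fun h ↦ h.2 rfl
  nth_rw 2 [← insert_sdiff_self_of_mem he]
  rw [wt, wt, finsum_mem_insert ℓ heA hA.sdiff, finsum_mem_insert ℓ hfA hA.sdiff]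
  ring

namespace Matroid

variable {α : Type*} {M : Matroid α} {B₁ B₂ : Set α} {e : α}

lemma IsBase.exists_symmetric_exchange (hB₁ : M.IsBase B₁) (hB₂ : M.IsBase B₂)
    (he : e ∈ B₁ \ B₂) :
    ∃ f ∈ B₂ \ B₁, M.IsBase (insert f (B₁ \ {e})) ∧ M.IsBase (insert e (B₂ \ {f})) := by
  have heE : e ∈ M.E := hB₁.subset_ground he.1
  -- The fundamental circuit of `e` over `B₂` and its fundamental cocircuit over `B₁`
  -- share `e`, so they share a second element `f`.
  have hC := hB₂.fundCircuit_isCircuit heE he.2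
  have hK := M.fundCocircuit_isCocircuit he.1 hB₁
  obtain ⟨f, ⟨hfC, hfK⟩, hfe⟩ := (hC.isCocircuit_inter_nontrivial hK
    ⟨e, M.mem_fundCircuit e B₂, M.mem_fundCocircuit e B₁⟩).exists_ne e
  have hfB₂ : f ∈ B₂ := (M.fundCircuit_subset_insert e B₂ hfC).resolve_left hfe
  have hfB₁ : f ∉ B₁ :=
    ((M.fundCocircuit_subset_insert_compl e B₁ hfK).resolve_left hfe).2
  rw [hB₁.mem_fundCocircuit_iff_mem_fundCircuit,
    hB₁.indep.mem_fundCircuit_iff (by rw [hB₁.closure_eq]; exact hB₂.subset_ground hfB₂) hfB₁,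
    ← insert_sdiff_singleton_comm hfe] at hfK
  rw [hB₂.indep.mem_fundCircuit_iff (by rw [hB₂.closure_eq]; exact heE) he.2,
    ← insert_sdiff_singleton_comm hfe.symm] at hfC
  exact ⟨f, ⟨hfB₂, hfB₁⟩, hB₁.exchange_isBase_of_indep hfB₁ hfK,
    hB₂.exchange_isBase_of_indep he.2 hfC⟩

lemma IsBase.exists_exchange_lt_of_wt_lt [M.RankFinite] {ℓ : α → ℝ} (hB₁ : M.IsBase B₁)
    (hB₂ : M.IsBase B₂) (hlt : wt ℓ B₂ < wt ℓ B₁) :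
    ∃ e ∈ B₁ \ B₂, ∃ f ∉ B₁, M.IsBase (insert f (B₁ \ {e})) ∧ ℓ f < ℓ e := by
  induction hk : (B₁ \ B₂).ncard using Nat.strong_induction_on generalizing B₂ with
  | _ k ih =>
  obtain ⟨e, he⟩ : (B₁ \ B₂).Nonempty := by
    rw [nonempty_iff_ne_empty, Ne, sdiff_eq_empty]
    intro hsub
    rw [hB₁.eq_of_subset_isBase hB₂ hsub] at hlt
    exact hlt.false
  obtain ⟨f, hf, hfB₁, hB₃⟩ := hB₁.exists_symmetric_exchange hB₂ he
  by_cases hfe : ℓ f < ℓ e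
  · exact ⟨e, he, f, hf.2, hfB₁, hfe⟩
  -- Otherwise the reverse exchange gives a base closer to `B₁` and still lighter than it.
  have hwt : wt ℓ (insert e (B₂ \ {f})) < wt ℓ B₁ := by
    rw [wt_insert_sdiff_singleton ℓ hB₂.finite hf.1 he.2]
    linarith [not_lt.1 hfe]
  have hssub : B₁ \ insert e (B₂ \ {f}) ⊂ B₁ \ B₂ := by
    refine ssubset_of_subset_not_subset (fun x hx ↦ ⟨hx.1, fun hxB₂ ↦ hx.2 ?_⟩)
      (fun h ↦ (h he).2 (mem_insert e _))
    exact Or.inr ⟨hxB₂, fun hxf ↦ hf.2 (hxf ▸ hx.1)⟩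
  obtain ⟨e', he', hrest⟩ :=
    ih _ (hk ▸ ncard_lt_ncard hssub hB₁.finite.sdiff) hB₃ hwt rfl
  exact ⟨e', hssub.subset he', hrest⟩

end Matroid

theorem broken_line_order_is_shelling_general {α : Type*} [Fintype α]
    (M : Matroid α)
    {n : ℕ} (B : Fin n → Set α) (hB : EnumeratesBases M B)
    (hwit : ∀ i : Fin n, ∃ ℓ : α → ℝ, Generic M ℓ ∧
      ∀ j : Fin n, wt ℓ (B j) < wt ℓ (B i) ↔ j < i) :
    IsShelling B := by
  obtain ⟨-, hbase, hsurj⟩ := hB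
  intro i j hij
  obtain ⟨ℓ, -, hord⟩ := hwit j
  obtain ⟨e, he, f, hf, hexch, hfe⟩ :=
    (hbase j).exists_exchange_lt_of_wt_lt (hbase i) ((hord i).2 hij)
  obtain ⟨k, hk⟩ := hsurj _ hexch
  have hkj : k < j := by
    rw [← hord k, hk, wt_insert_sdiff_singleton ℓ (hbase j).finite he.1 hf]
    linarith
  have hcap : B k ∩ B j = B j \ {e} := by
    rw [hk, insert_inter_of_notMem hf, inter_eq_left.2 sdiff_subset]
  refine ⟨k, hkj, ?_, ?_⟩
  · rw [hcap]
    exact fun x hx ↦ ⟨hx.2, fun hxe ↦ he.2 (hxe ▸ hx.1)⟩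
  · rw [hcap, ncard_sdiff_singleton_of_mem he.1]

theorem broken_line_order_is_shelling {α : Type*} [Fintype α]
    (M : Matroid α) (hE : M.E = Set.univ)
    {n : ℕ} (B : Fin n → Set α) (hB : EnumeratesBases M B)
    (hwit : ∀ i : Fin n, ∃ ℓ : α → ℝ, Generic M ℓ ∧
      ∀ j : Fin n, wt ℓ (B j) < wt ℓ (B i) ↔ j < i) :
    IsShelling B :=
  broken_line_order_is_shelling_general M B hB hwit
end

section
/- Let M be a matroid on a finite ground set E with a linear order < on E. Then any two bases have a meet in the internal order: for all bases B and B' of M there exists a basis C of M such that IP_<(C) ⊆ IP_<(B) ∩ IP_<(B'), and for every basis D with IP_<(D) ⊆ IP_<(B) and IP_<(D) ⊆ IP_<(B') one has IP_<(D) ⊆ IP_<(C). Consequently, the poset of internally passive sets ordered by inclusion becomes a lattice after attaching an artificial maximum. (Theorem 4.1.B (thm:Dawson-Chari B), after Las Vergnas.) -/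
/-!
For a basis `B`, an element `q ∈ B` is internally active exactly when every smaller element
lies in the hyperplane `cl (B \ {q})`. The set `X = IP B ∩ IP B'` is independent, and the
colex-least basis `C` containing `X` has `IP C ⊆ X`. If `IP D ⊆ X`, then `IP D ⊆ IP C` by
induction on `|D \ C|`: exchange the largest `a ∈ D \ C` for some `g ∈ C \ D`. As `a` is
active, `a < g`. Comparing the hyperplanes spanned by `D \ {a, p}` together with one of
`a`, `p`, `g` shows that the exchange keeps every passive element of `D` passive and creates no
passive element outside `X`; for the latter, no element of `C \ X` is spanned by a set that
adds to `C` only smaller elements.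
-/

/-- The internally passive set of a basis `B` with respect to a strict order `lt`. -/
def IP {α : Type*} (M : Matroid α) (lt : α → α → Prop) (B : Set α) : Set α :=
  {b | b ∈ B ∧ ∃ b', b' ∉ B ∧ lt b' b ∧ M.IsBase (insert b' (B \ {b}))}

open Set

namespace Set

variable {α : Type*} {s : Set α} {a g x : α}

lemma sdiff_singleton_eq_insert_sdiff_pair (has : a ∈ s) (hax : a ≠ x) :
    s \ {x} = insert a (s \ {a, x}) := by
  ext y; by_cases hy : y = a <;> simp_all

lemma insert_sdiff_singleton_sdiff_singleton (hgx : g ≠ x) :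
    insert g (s \ {a}) \ {x} = insert g (s \ {a, x}) := by
  ext y; by_cases hy : y = g <;> simp_all [and_assoc]

end Set

namespace Matroid

variable {α : Type*} {M : Matroid α} {B C D S X : Set α} {a e g q x : α}

lemma IsBase.isBase_insert_sdiff_singleton_iff (hB : M.IsBase B) (hx : x ∈ B) (he : e ∈ M.E) :
    M.IsBase (insert e (B \ {x})) ↔ e ∉ M.closure (B \ {x}) := by
  have hI : M.Indep (B \ {x}) := hB.indep.subset sdiff_subset
  refine ⟨fun h hcl ↦ hB.indep.notMem_closure_sdiff_of_mem hx ?_, fun hcl ↦ ?_⟩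
  · rw [← closure_insert_eq_of_mem_closure hcl, h.closure_eq]
    exact hB.subset_ground hx
  obtain rfl | hex := eq_or_ne e x
  · rwa [insert_sdiff_singleton, insert_eq_of_mem hx]
  have heB : e ∉ B := fun heB ↦ hcl (M.mem_closure_of_mem' ⟨heB, hex⟩)
  exact hB.exchange_isBase_of_indep heB
    ((hI.insert_indep_iff_of_notMem (by simp [heB])).2 ⟨he, hcl⟩)

variable [LinearOrder α]

lemma IsBase.mem_IP_iff (hB : M.IsBase B) :
    q ∈ IP M (· < ·) B ↔ q ∈ B ∧ ∃ e ∈ M.E, e < q ∧ e ∉ M.closure (B \ {q}) := by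
  refine ⟨fun ⟨hqB, e, heB, heq, he⟩ ↦ ?_, fun ⟨hqB, e, heE, heq, he⟩ ↦ ?_⟩
  · have heE : e ∈ M.E := he.subset_ground (mem_insert e _)
    exact ⟨hqB, e, heE, heq, (hB.isBase_insert_sdiff_singleton_iff hqB heE).1 he⟩
  · have heB : e ∉ B := fun heB ↦ he (M.mem_closure_of_mem' ⟨heB, heq.ne⟩)
    exact ⟨hqB, e, heB, heq, (hB.isBase_insert_sdiff_singleton_iff hqB heE).2 he⟩

lemma IsBase.mem_closure_of_notMem_IP (hB : M.IsBase B) (hqB : q ∈ B)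
    (hq : q ∉ IP M (· < ·) B) (he : e ∈ M.E) (heq : e < q) : e ∈ M.closure (B \ {q}) := by
  by_contra hcl
  exact hq (hB.mem_IP_iff.2 ⟨hqB, e, he, heq, hcl⟩)

-- Such a set lies in the hyperplane `cl (C \ {q})`, which misses `q`.
lemma IsBase.not_isBase_of_forall_lt (hC : M.IsBase C) (hqC : q ∈ C)
    (hq : q ∉ IP M (· < ·) C) (hqS : q ∉ S) (hS : ∀ x ∈ S, x ∉ C → x < q) :
    ¬ M.IsBase S := by
  intro hSB
  have hScl : S ⊆ M.closure (C \ {q}) := by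
    intro x hxS
    by_cases hxC : x ∈ C
    · exact M.mem_closure_of_mem' ⟨hxC, fun h ↦ hqS (h ▸ hxS)⟩ (hC.subset_ground hxC)
    · exact hC.mem_closure_of_notMem_IP hqC hq (hSB.subset_ground hxS) (hS x hxS hxC)
  refine hC.indep.notMem_closure_sdiff_of_mem hqC (closure_subset_closure_of_subset_closure hScl ?_)
  rw [hSB.closure_eq]
  exact hC.subset_ground hqC

lemma IsBase.IP_subset_IP_insert_sdiff (hD : M.IsBase D) (haD : a ∈ D)
    (ha : a ∉ IP M (· < ·) D) (hag : a < g) (hD' : M.IsBase (insert g (D \ {a}))) :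
    IP M (· < ·) D ⊆ IP M (· < ·) (insert g (D \ {a})) := by
  intro p hp
  obtain ⟨hpD, e, heE, hep, he⟩ := hD.mem_IP_iff.1 hp
  have hpa : p ≠ a := by rintro rfl; exact ha hp
  set A := D \ {a, p}
  have hDp : D \ {p} = insert a A := sdiff_singleton_eq_insert_sdiff_pair haD hpa.symm
  have hDa : D \ {a} = insert p A := by
    rw [sdiff_singleton_eq_insert_sdiff_pair hpD hpa, pair_comm]
  have hg : g ∉ M.closure (insert p A) := by
    rw [← hDa, ← hD.isBase_insert_sdiff_singleton_iff haD (hD'.subset_ground (mem_insert g _))]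
    exact hD'
  have hgp : g ≠ p := by
    rintro rfl; exact hg (M.mem_closure_of_mem' (mem_insert g A) (hD.subset_ground hpD))
  have hAcl : M.closure A ⊆ M.closure (insert p A) := M.closure_subset_closure (subset_insert p A)
  rw [hDp] at he
  rw [hD'.mem_IP_iff, insert_sdiff_singleton_sdiff_singleton hgp]
  refine ⟨mem_insert_of_mem g ⟨hpD, hpa⟩, ?_⟩
  by_cases hga : g ∈ M.closure (insert a A)
  · -- Pivoting on `g` does not move the hyperplane spanned by `D \ {p}`.
    rw [closure_insert_congr ⟨hga, fun h ↦ hg (hAcl h)⟩]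
    exact ⟨e, heE, hep, he⟩
  obtain hap | hpa := lt_or_gt_of_ne hpa.symm
  · refine ⟨a, hD.subset_ground haD, hap, fun hacl ↦ hga (closure_exchange ⟨hacl, ?_⟩).1⟩
    exact fun h ↦ hD.indep.notMem_closure_sdiff_of_mem haD (hDa ▸ hAcl h)
  · refine ⟨e, heE, hep, fun hecl ↦ hg ?_⟩
    have heA : e ∉ M.closure A := fun h ↦ he (M.closure_subset_closure (subset_insert a A) h)
    have hep' : e ∈ M.closure (insert p A) :=
      hDa ▸ hD.mem_closure_of_notMem_IP haD ha heE (hep.trans hpa)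
    rw [← closure_insert_congr ⟨hep', heA⟩]
    exact (closure_exchange ⟨hecl, heA⟩).1

lemma IsBase.IP_insert_sdiff_subset (hC : M.IsBase C) (hXC : X ⊆ C)
    (hIPC : IP M (· < ·) C ⊆ X) (hD : M.IsBase D) (hIPD : IP M (· < ·) D ⊆ X)
    (haD : a ∈ D \ C) (hmax : ∀ x ∈ D \ C, x ≤ a) (hgC : g ∈ C \ D) (hag : a < g)
    (hD' : M.IsBase (insert g (D \ {a}))) :
    IP M (· < ·) (insert g (D \ {a})) ⊆ X := by
  have ha : a ∉ IP M (· < ·) D := fun h ↦ haD.2 (hXC (hIPD h))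
  intro q hq
  by_contra hqX
  have hqC' : q ∉ IP M (· < ·) C := fun h ↦ hqX (hIPC h)
  obtain ⟨hqD', e, heE, heq, he⟩ := hD'.mem_IP_iff.1 hq
  obtain rfl | ⟨hqD, hqa⟩ := hqD'
  · exact hC.not_isBase_of_forall_lt hgC.1 hqC' hgC.2
      (fun x hxD hxC ↦ (hmax x ⟨hxD, hxC⟩).trans_lt hag) hD
  have hq : q ∉ IP M (· < ·) D := fun h ↦ hqX (hIPD h)
  have hgq : g ≠ q := by rintro rfl; exact hgC.2 hqD
  set A := D \ {a, q}
  have hDq : D \ {q} = insert a A := sdiff_singleton_eq_insert_sdiff_pair haD.1 (Ne.symm hqa)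
  have hDa : D \ {a} = insert q A := by
    rw [sdiff_singleton_eq_insert_sdiff_pair hqD hqa, pair_comm]
  rw [insert_sdiff_singleton_sdiff_singleton hgq] at he
  have heA : e ∉ M.closure A := fun h ↦ he (M.closure_subset_closure (subset_insert g A) h)
  have hea : e ∈ M.closure (insert a A) := hDq ▸ hD.mem_closure_of_notMem_IP hqD hq heE heq
  obtain hqa | haq := lt_or_gt_of_ne hqa
  · have heq' : e ∈ M.closure (insert q A) :=
      hDa ▸ hD.mem_closure_of_notMem_IP haD.1 ha heE (heq.trans hqa)
    refine hD.indep.notMem_closure_sdiff_of_mem hqD ?_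
    rw [hDq, ← closure_insert_congr ⟨hea, heA⟩, closure_insert_congr ⟨heq', heA⟩]
    exact M.mem_closure_of_mem' (mem_insert q A) (hD.subset_ground hqD)
  have hqC : q ∈ C := by_contra fun hqC ↦ (hmax q ⟨hqD, hqC⟩).not_gt haq
  have hg : g ∉ M.closure (D \ {q}) := by
    have hgA : g ∉ M.closure (insert q A) := by
      rw [← hDa, ← hD.isBase_insert_sdiff_singleton_iff haD.1 (hC.subset_ground hgC.1)]
      exact hD'
    rw [hDq]
    intro hg
    refine he ?_
    have hgA' : g ∉ M.closure A := fun h ↦ hgA (M.closure_subset_closure (subset_insert q A) h)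
    rwa [closure_insert_congr ⟨hg, hgA'⟩]
  refine hC.not_isBase_of_forall_lt hqC hqC' (S := insert g (D \ {q})) ?_ ?_
    ((hD.isBase_insert_sdiff_singleton_iff hqD (hC.subset_ground hgC.1)).2 hg)
  · rintro (h | ⟨-, h⟩)
    exacts [hgq h.symm, h rfl]
  · rintro x (rfl | ⟨hxD, -⟩) hxC
    exacts [absurd hgC.1 hxC, (hmax x ⟨hxD, hxC⟩).trans_lt haq]

theorem IsBase.IP_subset_IP_of_IP_subset [Finite α] {D : Set α} (hC : M.IsBase C) (hXC : X ⊆ C)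
    (hIPC : IP M (· < ·) C ⊆ X) (hD : M.IsBase D) (hIPD : IP M (· < ·) D ⊆ X) :
    IP M (· < ·) D ⊆ IP M (· < ·) C := by
  obtain hDC | hne := (D \ C).eq_empty_or_nonempty
  · rw [hD.eq_of_subset_isBase hC (sdiff_eq_empty.1 hDC)]
  obtain ⟨a, haD, hmax⟩ := (D \ C).exists_max_image id (toFinite _) hne
  obtain ⟨g, hgC, hD'⟩ := hD.exchange hC haD
  have ha : a ∉ IP M (· < ·) D := fun h ↦ haD.2 (hXC (hIPD h))
  have hag : a < g := lt_of_not_ge fun hga ↦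
    ha ⟨haD.1, g, hgC.2, hga.lt_of_ne (by rintro rfl; exact haD.2 hgC.1), hD'⟩
  have hIPD' := hC.IP_insert_sdiff_subset hXC hIPC hD hIPD haD hmax hgC hag hD'
  have : (insert g (D \ {a}) \ C).ncard < (D \ C).ncard := by
    rw [insert_sdiff_of_mem _ hgC.1, sdiff_sdiff_comm]
    exact ncard_sdiff_singleton_lt_of_mem haD
  exact (hD.IP_subset_IP_insert_sdiff haD.1 ha hag hD').trans
    (hC.IP_subset_IP_of_IP_subset hXC hIPC hD' hIPD')
termination_by (D \ C).ncard

theorem Indep.exists_isBase_superset_IP_subset [Finite α] (hX : M.Indep X) :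
    ∃ C, M.IsBase C ∧ X ⊆ C ∧ IP M (· < ·) C ⊆ X := by
  obtain ⟨C, ⟨hC, hXC⟩, hmin⟩ := (toFinite {C | M.IsBase C ∧ X ⊆ C}).exists_minimalFor
    (fun C ↦ toColex C.toFinite.toFinset) _ hX.exists_isBase_superset
  -- Swapping a passive `c ∉ X` for a smaller `e` would give a colex-smaller such basis.
  refine ⟨C, hC, hXC, fun c hc ↦ by_contra fun hcX ↦ ?_⟩
  obtain ⟨hcC, e, heC, hec, hC'⟩ := hc
  have hlt : toColex (insert e (C \ {c})).toFinite.toFinset < toColex C.toFinite.toFinset := by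
    rw [Finset.Colex.toColex_lt_toColex_iff_exists_forall_lt]
    refine ⟨c, by simpa, by simp [hec.ne'], fun b hb hbC ↦ ?_⟩
    simp only [Finite.mem_toFinset, mem_insert_iff, mem_sdiff, mem_singleton_iff] at hb hbC
    obtain rfl | ⟨hbC', -⟩ := hb
    exacts [hec, absurd hbC' hbC]
  refine hlt.not_ge (hmin ⟨hC', fun x hx ↦ mem_insert_of_mem e ⟨hXC hx, ?_⟩⟩ hlt.le)
  rintro rfl
  exact hcX hx

end Matroid

theorem internal_order_has_meets_general {α : Type*} [Fintype α] [LinearOrder α]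
    (M : Matroid α)
    (B B' : Set α) (hB : M.IsBase B) :
    ∃ C : Set α, M.IsBase C ∧
      IP M (· < ·) C ⊆ IP M (· < ·) B ∩ IP M (· < ·) B' ∧
      ∀ D : Set α, M.IsBase D → IP M (· < ·) D ⊆ IP M (· < ·) B →
        IP M (· < ·) D ⊆ IP M (· < ·) B' → IP M (· < ·) D ⊆ IP M (· < ·) C := by
  have hX : M.Indep (IP M (· < ·) B ∩ IP M (· < ·) B') :=
    hB.indep.subset fun _ hx ↦ hx.1.1
  obtain ⟨C, hC, hXC, hIPC⟩ := hX.exists_isBase_superset_IP_subset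
  exact ⟨C, hC, hIPC, fun D hD hDB hDB' ↦
    hC.IP_subset_IP_of_IP_subset hXC hIPC hD (subset_inter hDB hDB')⟩

theorem internal_order_has_meets {α : Type*} [Fintype α] [LinearOrder α]
    (M : Matroid α) (hE : M.E = Set.univ)
    (B B' : Set α) (hB : M.IsBase B) (hB' : M.IsBase B') :
    ∃ C : Set α, M.IsBase C ∧
      IP M (· < ·) C ⊆ IP M (· < ·) B ∩ IP M (· < ·) B' ∧
      ∀ D : Set α, M.IsBase D → IP M (· < ·) D ⊆ IP M (· < ·) B →
        IP M (· < ·) D ⊆ IP M (· < ·) B' → IP M (· < ·) D ⊆ IP M (· < ·) C :=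
  internal_order_has_meets_general M B B' hB
end
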